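/- arXiv:2302.04605 — 6 statements merged into one kernel-verified Lean document; each statement's English description precedes it below -/
import Mathlib

section
/- For every y > 0, the double integral ∫₀^∞ [∫₀^∞ (1 - e^{-s·y}) t e^{-t·s} ds] e^{-t} dt equals -y e^y Ei(-y), where Ei(-y) = -∫_y^∞ e^{-u}/u du. -/
/-!
Writing `(1 - e^{-sy}) e^{-ts} = e^{-ts} - e^{-(t+y)s}` makes the inner integral elementary, equal to
`t (1/t - 1/(t+y)) = y / (t+y)`. Since `e^{-t} = e^y e^{-(t+y)}`, the outer integrand becomes
`y e^y e^{-u} / u` with `u = t + y`, and the substitution turns the outer integral into the tail of `Ei`.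
-/

open MeasureTheory Real

lemma integral_exp_neg_mul_Ioi_zero {b : ℝ} (hb : 0 < b) :
    ∫ s in Set.Ioi (0 : ℝ), exp (-(b * s)) = b⁻¹ := by
  simpa [neg_mul, neg_div] using integral_exp_mul_Ioi (neg_lt_zero.mpr hb) 0

lemma integrableOn_exp_neg_mul_Ioi_zero {b : ℝ} (hb : 0 < b) :
    IntegrableOn (fun s => exp (-(b * s))) (Set.Ioi (0 : ℝ)) := by
  simpa only [neg_mul] using exp_neg_integrableOn_Ioi 0 hb

lemma integral_one_sub_exp_mul_exp_Ioi {t y : ℝ} (ht : 0 < t) (hty : 0 < t + y) :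
    ∫ s in Set.Ioi (0 : ℝ), (1 - exp (-(s * y))) * (t * exp (-(t * s))) = y / (t + y) := by
  have hsplit : ∀ s : ℝ, (1 - exp (-(s * y))) * (t * exp (-(t * s)))
      = t * exp (-(t * s)) - t * exp (-((t + y) * s)) := fun s => by
    rw [show -((t + y) * s) = -(t * s) + -(s * y) by ring, exp_add]
    ring
  simp only [hsplit]
  rw [integral_sub ((integrableOn_exp_neg_mul_Ioi_zero ht).const_mul t)
      ((integrableOn_exp_neg_mul_Ioi_zero hty).const_mul t),
    integral_const_mul, integral_const_mul,
    integral_exp_neg_mul_Ioi_zero ht, integral_exp_neg_mul_Ioi_zero hty]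
  field_simp
  ring

lemma setIntegral_Ioi_comp_add_right {E : Type*} [NormedAddCommGroup E] [NormedSpace ℝ E]
    (f : ℝ → E) (a c : ℝ) :
    ∫ x in Set.Ioi a, f (x + c) = ∫ x in Set.Ioi (a + c), f x := by
  have h := (measurePreserving_add_right volume c).setIntegral_preimage_emb
    (MeasurableEquiv.addRight c).measurableEmbedding f (Set.Ioi (a + c))
  rwa [Set.preimage_add_const_Ioi, add_sub_cancel_right] at h

theorem double_integral_cdf_Y3 (y : ℝ) (hy : 0 < y) :
    ∫ t in Set.Ioi (0 : ℝ),
        (∫ s in Set.Ioi (0 : ℝ), (1 - exp (-(s * y))) * (t * exp (-(t * s)))) * exp (-t)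
      = -y * exp y * (-(∫ u in Set.Ioi y, exp (-u) / u)) := by
  have hinner : ∀ t ∈ Set.Ioi (0 : ℝ),
      (∫ s in Set.Ioi (0 : ℝ), (1 - exp (-(s * y))) * (t * exp (-(t * s)))) * exp (-t)
        = y * exp y * (exp (-(t + y)) / (t + y)) := fun t (ht : 0 < t) => by
    rw [integral_one_sub_exp_mul_exp_Ioi ht (by linarith), neg_add, exp_add, exp_neg y]
    field_simp
  rw [setIntegral_congr_fun measurableSet_Ioi hinner, integral_const_mul,
    setIntegral_Ioi_comp_add_right (fun u => exp (-u) / u), zero_add]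
  ring
end

section
/- The Euler–Mascheroni constant γ satisfies γ = -∫₀^∞ ln(t) e^{-t} dt. -/
open MeasureTheory Real

lemma aux_hasDerivAt_complexGamma_one :
    HasDerivAt Complex.Gamma
      ((∫ t in Set.Ioi (0 : ℝ), Real.log t * exp (-t) : ℝ) : ℂ) 1 := by
  have h := Complex.hasDerivAt_GammaIntegral (s := 1) (by norm_num)
  have hint : (∫ t : ℝ in Set.Ioi 0, (t : ℂ) ^ ((1 : ℂ) - 1) * (Real.log t * Real.exp (-t)))
      = ((∫ t in Set.Ioi (0 : ℝ), Real.log t * exp (-t) : ℝ) : ℂ) := by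
    simp only [sub_self, Complex.cpow_zero, one_mul, ← Complex.ofReal_mul]
    exact integral_ofReal
  rw [hint] at h
  -- Gamma agrees with GammaIntegral near 1
  have heq : Complex.Gamma =ᶠ[nhds (1 : ℂ)] Complex.GammaIntegral := by
    have hopen : IsOpen {s : ℂ | 0 < s.re} := isOpen_lt continuous_const Complex.continuous_re
    filter_upwards [hopen.mem_nhds (by norm_num : (0:ℝ) < (1:ℂ).re)] with s hs
    exact Complex.Gamma_eq_integral hs
  exact h.congr_of_eventuallyEq heq

theorem eulerMascheroni_integral :
    Real.eulerMascheroniConstant = -∫ t in Set.Ioi (0 : ℝ), Real.log t * exp (-t) := by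
  have h1 : HasDerivAt Real.Gamma (∫ t in Set.Ioi (0 : ℝ), Real.log t * exp (-t)) 1 := by
    have h := aux_hasDerivAt_complexGamma_one.real_of_complex
    simpa [Complex.Gamma_ofReal] using h
  have h2 := Real.hasDerivAt_Gamma_one
  have := h1.unique h2
  linarith
end

section
/- If X is an Exponential random variable with rate 1, then E[-ln X] = γ, the Euler–Mascheroni constant. -/
/-!
Pushing forward along `X`, the expectation is `-∫₀^∞ log t · e^{-t} dt`. Differentiating
`Γ(s) = ∫₀^∞ t^{s-1} e^{-t} dt` under the integral sign identifies this integral with `-Γ'(1)`,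
and `Γ'(1) = -γ`.
-/

open MeasureTheory ProbabilityTheory Real Set

theorem Real.hasDerivAt_Gamma_integral_log {s : ℝ} (hs : 0 < s) :
    HasDerivAt Gamma (∫ t in Ioi 0, t ^ (s - 1) * (log t * exp (-t))) s := by
  have hs' : 0 < (s : ℂ).re := by simpa using hs
  have hGamma : Complex.Gamma =ᶠ[nhds (s : ℂ)] Complex.GammaIntegral := by
    filter_upwards [Complex.continuous_re.isOpen_preimage _ isOpen_Ioi |>.mem_nhds hs']
      with z hz using Complex.Gamma_eq_integral hz
  have hcomplex := (Complex.hasDerivAt_GammaIntegral hs').congr_of_eventuallyEq hGamma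
  have hintegrand : ∀ t ∈ Ioi (0 : ℝ), (t : ℂ) ^ ((s : ℂ) - 1) * (log t * exp (-t))
      = ((t ^ (s - 1) * (log t * exp (-t)) : ℝ) : ℂ) := fun t ht => by
    push_cast
    rw [Complex.ofReal_cpow (le_of_lt ht)]
    push_cast; ring
  rw [setIntegral_congr_fun measurableSet_Ioi hintegrand, integral_complex_ofReal] at hcomplex
  have hreal := hcomplex.real_of_complex
  rw [Complex.ofReal_re] at hreal
  exact hreal

theorem Real.integral_log_mul_exp_neg :
    ∫ t in Ioi (0 : ℝ), log t * exp (-t) = -eulerMascheroniConstant := by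
  simpa using (hasDerivAt_Gamma_integral_log one_pos).unique hasDerivAt_Gamma_one

theorem integral_expMeasure {r : ℝ} (hr : 0 ≤ r) (f : ℝ → ℝ) :
    ∫ x, f x ∂expMeasure r = ∫ x in Ioi 0, r * exp (-(r * x)) * f x := by
  rw [show expMeasure r = volume.withDensity (exponentialPDF r) from rfl,
    integral_withDensity_eq_integral_toReal_smul (f := exponentialPDF r)
      (measurable_exponentialPDFReal r).ennreal_ofReal (by simp [exponentialPDF]),
    ← integral_Ici_eq_integral_Ioi, ← integral_indicator measurableSet_Ici]
  congr 1 with x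
  by_cases hx : 0 ≤ x
  · simp [hx, exponentialPDF_of_nonneg, ENNReal.toReal_ofReal, hr, (exp_pos _).le]
  · simp [hx, exponentialPDF_of_neg (not_le.mp hx)]

theorem expectation_neg_log_exponential_general
    {Ω : Type*} [MeasurableSpace Ω] (μ : Measure Ω)
    (X : Ω → ℝ) (hXm : Measurable X)
    (hX : Measure.map X μ = expMeasure 1) :
    ∫ ω, -Real.log (X ω) ∂μ = Real.eulerMascheroniConstant := by
  rw [← integral_map (f := fun x => -log x) hXm.aemeasurable
    measurable_log.neg.aestronglyMeasurable, hX, integral_expMeasure zero_le_one]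
  have hintegrand : (fun x => 1 * exp (-(1 * x)) * -log x) = fun x => -(log x * exp (-x)) := by
    ext x; rw [one_mul, one_mul]; ring
  rw [hintegrand, integral_neg, integral_log_mul_exp_neg, neg_neg]

theorem expectation_neg_log_exponential
    {Ω : Type*} [MeasurableSpace Ω] (μ : Measure Ω) [IsProbabilityMeasure μ]
    (X : Ω → ℝ) (hXm : Measurable X)
    (hX : Measure.map X μ = expMeasure 1) :
    ∫ ω, -Real.log (X ω) ∂μ = Real.eulerMascheroniConstant :=
  expectation_neg_log_exponential_general μ X hXm hX
end

section
/- The function G(w) := -e^{e^w + w} Ei(-e^w) takes values in (0,1) for all real w, is monotone increasing, tends to 0 as w → -∞, and tends to 1 as w → +∞; hence G is a cumulative distribution function on ℝ. -/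
open MeasureTheory Real Filter

noncomputable def G (w : ℝ) : ℝ :=
  -exp (exp w + w) * (-(∫ u in Set.Ioi (exp w), exp (-u) / u))

open Set Topology

/-!
Substituting `u = e^w + t` gives `G w = H (e^w)` with `H x = ∫₀^∞ e^{-t} x / (t + x) dt`
(`expRatioIntegral`), the mean of `x / (T + x)` for an exponentially distributed `T`.
The weight `x / (t + x)` lies in `(0, 1)`, increases with `x`, and tends to `0` as `x → 0⁺`
and to `1` as `x → ∞`; dominated convergence, with `e^{-t}` as dominating function, carries
these properties over to `H`.
-/

section ExpNegWeighted

variable {f : ℝ → ℝ}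

lemma integrableOn_exp_neg_Ioi_zero : IntegrableOn (fun t : ℝ => exp (-t)) (Ioi 0) := by
  simpa using exp_neg_integrableOn_Ioi 0 one_pos

lemma integrableOn_exp_neg_mul (hf : Measurable f)
    (hf_le : ∀ t ∈ Ioi (0 : ℝ), |f t| ≤ 1) :
    IntegrableOn (fun t => exp (-t) * f t) (Ioi 0) := by
  refine integrableOn_exp_neg_Ioi_zero.mul_bdd (c := 1) hf.aestronglyMeasurable ?_
  filter_upwards [ae_restrict_mem measurableSet_Ioi] with t ht using hf_le t ht

lemma setIntegral_exp_neg_mul_pos (hf : Measurable f)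
    (hf_pos : ∀ t ∈ Ioi (0 : ℝ), 0 < f t) (hf_le : ∀ t ∈ Ioi (0 : ℝ), f t ≤ 1) :
    0 < ∫ t in Ioi 0, exp (-t) * f t := by
  have hf_abs : ∀ t ∈ Ioi (0 : ℝ), |f t| ≤ 1 := fun t ht =>
    abs_le.2 ⟨by linarith [hf_pos t ht], hf_le t ht⟩
  rw [setIntegral_pos_iff_support_of_nonneg_ae _ (integrableOn_exp_neg_mul hf hf_abs)]
  · have hsupp : Ioi (0 : ℝ) ⊆ Function.support (fun t => exp (-t) * f t) := fun t ht =>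
      (mul_pos (exp_pos _) (hf_pos t ht)).ne'
    rw [inter_eq_right.2 hsupp]
    simp
  · filter_upwards [ae_restrict_mem measurableSet_Ioi] with t ht
    exact (mul_pos (exp_pos _) (hf_pos t ht)).le

lemma tendsto_setIntegral_exp_neg_mul {ι : Type*} {l : Filter ι} [l.IsCountablyGenerated]
    {F : ι → ℝ → ℝ} (hF : ∀ i, Measurable (F i))
    (hF_le : ∀ᶠ i in l, ∀ t ∈ Ioi (0 : ℝ), |F i t| ≤ 1)
    (h_lim : ∀ t ∈ Ioi (0 : ℝ), Tendsto (fun i => F i t) l (𝓝 (f t))) :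
    Tendsto (fun i => ∫ t in Ioi 0, exp (-t) * F i t) l
      (𝓝 (∫ t in Ioi 0, exp (-t) * f t)) := by
  refine tendsto_integral_filter_of_dominated_convergence (fun t => exp (-t))
    (Eventually.of_forall fun i =>
      ((by fun_prop : Measurable fun t : ℝ => exp (-t)).mul (hF i)).aestronglyMeasurable) ?_
    integrableOn_exp_neg_Ioi_zero ?_
  · filter_upwards [hF_le] with i hi
    filter_upwards [ae_restrict_mem measurableSet_Ioi] with t ht
    rw [norm_mul, norm_of_nonneg (exp_pos _).le]
    exact mul_le_of_le_one_right (exp_pos _).le (hi t ht)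
  · filter_upwards [ae_restrict_mem measurableSet_Ioi] with t ht
    exact (h_lim t ht).const_mul _

end ExpNegWeighted

noncomputable def expRatioIntegral (x : ℝ) : ℝ := ∫ t in Ioi 0, exp (-t) * (x / (t + x))

lemma G_eq_expRatioIntegral (w : ℝ) : G w = expRatioIntegral (exp w) := by
  have h_shift : (∫ u in Ioi (exp w), exp (-u) / u)
      = ∫ t in Ioi 0, exp (-(t + exp w)) / (t + exp w) := by
    rw [← (measurePreserving_add_right volume (exp w)).setIntegral_preimage_emb
      (measurableEmbedding_addRight _) (fun u => exp (-u) / u) _]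
    simp [preimage_add_const_Ioi]
  rw [G, h_shift, expRatioIntegral, neg_mul_neg, exp_add, ← integral_const_mul]
  refine setIntegral_congr_fun measurableSet_Ioi fun t _ => ?_
  rw [neg_add, exp_add, exp_neg (exp w)]
  field_simp

section

variable {t x : ℝ}

lemma div_add_self_mem_Ioo (ht : 0 < t) (hx : 0 < x) : x / (t + x) ∈ Ioo 0 1 :=
  ⟨by positivity, (div_lt_one (by positivity)).2 (by linarith)⟩

lemma abs_div_add_self_le_one (ht : 0 < t) (hx : 0 < x) : |x / (t + x)| ≤ 1 := by
  obtain ⟨h0, h1⟩ := div_add_self_mem_Ioo ht hx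
  exact abs_le.2 ⟨by linarith, h1.le⟩

lemma tendsto_div_add_self_nhdsGT_zero (ht : 0 < t) :
    Tendsto (fun x => x / (t + x)) (𝓝[>] 0) (𝓝 0) := by
  have h_cont : ContinuousAt (fun x => x / (t + x)) 0 := by fun_prop (disch := simp [ht.ne'])
  simpa using h_cont.tendsto.mono_left nhdsWithin_le_nhds

lemma tendsto_div_add_self_atTop : Tendsto (fun x => x / (t + x)) atTop (𝓝 1) := by
  have h : Tendsto (fun x => 1 - t / (t + x)) atTop (𝓝 (1 - 0)) :=
    tendsto_const_nhds.sub
      (tendsto_const_nhds.div_atTop (tendsto_atTop_add_const_left _ _ tendsto_id))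
  rw [sub_zero] at h
  refine h.congr' ((eventually_gt_atTop (-t)).mono fun x (hx : -t < x) => ?_)
  have : t + x ≠ 0 := by linarith
  field_simp
  ring

lemma expRatioIntegral_pos (hx : 0 < x) : 0 < expRatioIntegral x :=
  setIntegral_exp_neg_mul_pos (by fun_prop) (fun t ht => (div_add_self_mem_Ioo ht hx).1)
    (fun t ht => (div_add_self_mem_Ioo ht hx).2.le)

lemma one_sub_expRatioIntegral (hx : 0 < x) :
    1 - expRatioIntegral x = ∫ t in Ioi 0, exp (-t) * (t / (t + x)) := by
  rw [← integral_exp_neg_Ioi_zero, expRatioIntegral, ← integral_sub integrableOn_exp_neg_Ioi_zero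
    (integrableOn_exp_neg_mul (by fun_prop) fun t ht => abs_div_add_self_le_one ht hx)]
  refine setIntegral_congr_fun measurableSet_Ioi fun t (ht : 0 < t) => ?_
  field_simp
  ring

lemma expRatioIntegral_lt_one (hx : 0 < x) : expRatioIntegral x < 1 := by
  have h_pos : 0 < ∫ t in Ioi 0, exp (-t) * (t / (t + x)) :=
    setIntegral_exp_neg_mul_pos (by fun_prop) (fun t (ht : 0 < t) => by positivity)
      fun t (ht : 0 < t) => (div_le_one (by positivity)).2 (by linarith)
  linarith [one_sub_expRatioIntegral hx]

end

lemma expRatioIntegral_monotoneOn : MonotoneOn expRatioIntegral (Ioi 0) := by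
  intro x (hx : 0 < x) y (hy : 0 < y) hxy
  refine setIntegral_mono_on
    (integrableOn_exp_neg_mul (by fun_prop) fun t ht => abs_div_add_self_le_one ht hx)
    (integrableOn_exp_neg_mul (by fun_prop) fun t ht => abs_div_add_self_le_one ht hy)
    measurableSet_Ioi fun t (ht : 0 < t) => ?_
  refine mul_le_mul_of_nonneg_left ?_ (exp_pos _).le
  rw [div_le_div_iff₀ (by positivity) (by positivity)]
  nlinarith

lemma tendsto_expRatioIntegral_nhdsGT_zero : Tendsto expRatioIntegral (𝓝[>] 0) (𝓝 0) := by
  have h : Tendsto expRatioIntegral (𝓝[>] 0) (𝓝 (∫ t in Ioi 0, exp (-t) * 0)) :=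
    tendsto_setIntegral_exp_neg_mul (F := fun x t => x / (t + x)) (fun x => by fun_prop)
      (eventually_nhdsWithin_of_forall fun x hx t ht => abs_div_add_self_le_one ht hx)
      fun t ht => tendsto_div_add_self_nhdsGT_zero ht
  simpa only [mul_zero, integral_zero] using h

lemma tendsto_expRatioIntegral_atTop : Tendsto expRatioIntegral atTop (𝓝 1) := by
  have h : Tendsto expRatioIntegral atTop (𝓝 (∫ t in Ioi 0, exp (-t) * 1)) :=
    tendsto_setIntegral_exp_neg_mul (F := fun x t => x / (t + x)) (fun x => by fun_prop)
      ((eventually_gt_atTop 0).mono fun x hx t ht => abs_div_add_self_le_one ht hx)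
      fun t _ => tendsto_div_add_self_atTop
  simpa only [mul_one, integral_exp_neg_Ioi_zero] using h

theorem G_is_cdf :
    (∀ w : ℝ, G w ∈ Set.Ioo (0 : ℝ) 1) ∧ Monotone G ∧
      Tendsto G atBot (nhds 0) ∧ Tendsto G atTop (nhds 1) := by
  simp only [funext G_eq_expRatioIntegral]
  refine ⟨fun w => ⟨expRatioIntegral_pos (exp_pos w), expRatioIntegral_lt_one (exp_pos w)⟩,
    fun a b hab => expRatioIntegral_monotoneOn (exp_pos a) (exp_pos b) (exp_le_exp.2 hab),
    tendsto_expRatioIntegral_nhdsGT_zero.comp tendsto_exp_atBot_nhdsGT,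
    tendsto_expRatioIntegral_atTop.comp tendsto_exp_atTop⟩
end

section
/- For every real w > 0, ∫₀^∞ sin(wz)/sinh(πz) dz = (1/2)·tanh(w/2). -/
/-!
Expanding `1 / sinh (π z) = 2 ∑ₙ exp (-(2n+1) π z)` and integrating termwise against
`sin (w z)` (a Laplace transform) gives `∑ₙ 2w / ((2n+1)² π² + w²)`. Up to the factor `1 / π`,
this is the odd part of the Mittag-Leffler expansion `π coth (π y) = 1 / y + ∑ₙ 2y / (y² + n²)`
at `y = w / π`; subtracting the even part, which is the same expansion at `y / 2`, and using
`2 coth (2u) = coth u + tanh u` leaves `(π / 2) tanh (π y / 2)`.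
-/

open MeasureTheory Real Set

section LaplaceTransform

variable {c : ℝ}

lemma exp_neg_mul_mul_sin_eq_im (c w z : ℝ) :
    exp (-(c * z)) * sin (w * z) = (Complex.exp ((-c + w * Complex.I) * z)).im := by
  rw [Complex.exp_im]
  simp

lemma integrableOn_exp_neg_mul_mul_sin (hc : 0 < c) (w : ℝ) :
    IntegrableOn (fun z => exp (-(c * z)) * sin (w * z)) (Ioi 0) := by
  simp_rw [exp_neg_mul_mul_sin_eq_im]
  exact (integrableOn_exp_mul_complex_Ioi (by simpa using hc) 0).im

lemma integral_exp_neg_mul_mul_sin (hc : 0 < c) (w : ℝ) :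
    ∫ z in Ioi 0, exp (-(c * z)) * sin (w * z) = w / (c ^ 2 + w ^ 2) := by
  have ha : (-c + w * Complex.I).re < 0 := by simpa using hc
  have h := integral_im (integrableOn_exp_mul_complex_Ioi ha 0)
  simp only [RCLike.im_to_complex] at h
  simp_rw [exp_neg_mul_mul_sin_eq_im]
  rw [h, integral_exp_mul_complex_Ioi ha 0]
  simp [Complex.normSq, sq, neg_div]

lemma integrableOn_mul_exp_neg_mul (hc : 0 < c) :
    IntegrableOn (fun z => z * exp (-(c * z))) (Ioi 0) := by
  simpa using integrableOn_rpow_mul_exp_neg_mul_rpow (p := 1) (s := 1) (by norm_num) one_pos hc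

lemma integral_mul_exp_neg_mul (hc : 0 < c) :
    ∫ z in Ioi 0, z * exp (-(c * z)) = 1 / c ^ 2 := by
  have h := integral_rpow_mul_exp_neg_mul_Ioi two_pos hc
  norm_num at h
  simpa using h

lemma integral_norm_exp_neg_mul_mul_sin_le (hc : 0 < c) (w : ℝ) :
    ∫ z in Ioi 0, ‖exp (-(c * z)) * sin (w * z)‖ ≤ |w| / c ^ 2 := by
  rw [div_eq_mul_one_div, ← integral_mul_exp_neg_mul hc, ← integral_const_mul]
  refine setIntegral_mono_on (integrableOn_exp_neg_mul_mul_sin hc w).norm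
    ((integrableOn_mul_exp_neg_mul hc).const_mul _) measurableSet_Ioi fun z hz => ?_
  have hz : 0 ≤ z := le_of_lt hz
  rw [norm_mul, norm_of_nonneg (exp_pos _).le, norm_eq_abs]
  calc exp (-(c * z)) * |sin (w * z)| ≤ exp (-(c * z)) * (|w| * z) := by
        gcongr
        simpa [abs_mul, abs_of_nonneg hz] using abs_sin_le_abs (x := w * z)
    _ = |w| * (z * exp (-(c * z))) := by ring

end LaplaceTransform

lemma hasSum_inv_sinh {x : ℝ} (hx : 0 < x) :
    HasSum (fun n : ℕ => 2 * exp (-((2 * n + 1) * x))) (sinh x)⁻¹ := by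
  have hr : exp (-(2 * x)) < 1 := exp_lt_one_iff.mpr (by linarith)
  have hfactor : 1 - exp (-(2 * x)) = 2 * exp (-x) * sinh x := by
    rw [sinh_eq, show -(2 * x) = -x + -x by ring, exp_add, exp_neg]
    field_simp
  have hvalue : 2 * exp (-x) * (1 - exp (-(2 * x)))⁻¹ = (sinh x)⁻¹ := by
    rw [hfactor, mul_inv, ← mul_assoc, mul_inv_cancel₀ (by positivity), one_mul]
  rw [← hvalue]
  refine ((hasSum_geometric_of_lt_one (exp_pos _).le hr).mul_left _).congr_fun fun n => ?_
  rw [← exp_nat_mul, mul_assoc, ← exp_add]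
  ring_nf

lemma hasSum_integral_sin_div_sinh (w : ℝ) :
    HasSum (fun n : ℕ => 2 * (w / (((2 * n + 1) * π) ^ 2 + w ^ 2)))
      (∫ z in Ioi 0, sin (w * z) / sinh (π * z)) := by
  set F : ℕ → ℝ → ℝ := fun n z => 2 * (exp (-((2 * n + 1) * π * z)) * sin (w * z))
  have hc (n : ℕ) : 0 < (2 * n + 1) * π := by positivity
  have hpointwise : ∀ z ∈ Ioi (0 : ℝ), ∑' n, F n z = sin (w * z) / sinh (π * z) := by
    intro z hz
    rw [div_eq_inv_mul, ← ((hasSum_inv_sinh (mul_pos pi_pos hz)).mul_right _).tsum_eq]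
    simp only [F, mul_assoc]
  have hsummable : Summable fun n => ∫ z in Ioi 0, ‖F n z‖ := by
    have hsq : Summable fun n : ℕ => 1 / ((n : ℝ) + 1) ^ 2 := by
      simpa using (summable_nat_add_iff 1).mpr (Real.summable_one_div_nat_pow.mpr one_lt_two)
    refine (hsq.mul_left (2 * |w|)).of_nonneg_of_le
      (fun n => integral_nonneg fun _ => norm_nonneg _) fun n => ?_
    have hle : (n : ℝ) + 1 ≤ (2 * n + 1) * π := by nlinarith [pi_gt_three]
    calc ∫ z in Ioi 0, ‖F n z‖
        = 2 * ∫ z in Ioi 0, ‖exp (-((2 * n + 1) * π * z)) * sin (w * z)‖ := by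
          simp only [F, norm_mul, Real.norm_ofNat, integral_const_mul]
      _ ≤ 2 * (|w| / ((2 * n + 1) * π) ^ 2) := by
          gcongr
          exact integral_norm_exp_neg_mul_mul_sin_le (hc n) w
      _ ≤ 2 * |w| * (1 / ((n : ℝ) + 1) ^ 2) := by
          rw [mul_assoc, mul_one_div]
          gcongr
  rw [← setIntegral_congr_fun measurableSet_Ioi hpointwise]
  refine (hasSum_integral_of_summable_integral_norm
    (fun n => (integrableOn_exp_neg_mul_mul_sin (hc n) w).const_mul 2) hsummable).congr_fun
    fun n => ?_
  rw [integral_const_mul, integral_exp_neg_mul_mul_sin (hc n)]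

lemma ofReal_mul_I_mem_integerComplement {y : ℝ} (hy : y ≠ 0) :
    (y : ℂ) * Complex.I ∈ Complex.integerComplement := by
  rintro ⟨n, hn⟩
  simpa [eq_comm, hy] using congrArg Complex.im hn

lemma hasSum_coth_partial_fractions {y : ℝ} (hy : y ≠ 0) :
    HasSum (fun n : ℕ => 2 * y / (y ^ 2 + (n + 1) ^ 2)) (π / tanh (π * y) - 1 / y) := by
  have hx := ofReal_mul_I_mem_integerComplement hy
  have hterm (n : ℕ) :
      ((2 * y / (y ^ 2 + (n + 1) ^ 2) : ℝ) : ℂ) = Complex.I * cotTerm (y * Complex.I) n := by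
    have h1 : (y : ℂ) * Complex.I - (n + 1) ≠ 0 := by
      simpa [sub_eq_add_neg] using Complex.integerComplement_add_ne_zero hx (-(n + 1) : ℤ)
    have h2 : (y : ℂ) * Complex.I + (n + 1) ≠ 0 := by
      simpa using Complex.integerComplement_add_ne_zero hx ((n : ℤ) + 1)
    have h3 : (y : ℂ) ^ 2 + (n + 1) ^ 2 ≠ 0 := by
      norm_cast; positivity
    simp only [cotTerm]
    push_cast
    field_simp
    linear_combination (-2 * (y : ℂ) * (n + 1) ^ 2) * Complex.I_sq
  have hvalue : ((π / tanh (π * y) - 1 / y : ℝ) : ℂ)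
      = Complex.I * (π * Complex.cot (π * (y * Complex.I)) - 1 / (y * Complex.I)) := by
    have hs : Real.sinh (π * y) ≠ 0 := by
      simpa [Real.sinh_eq_zero] using mul_ne_zero pi_ne_zero hy
    rw [Complex.cot_eq_cos_div_sin, ← mul_assoc, Complex.cos_mul_I, Complex.sin_mul_I]
    push_cast [Real.tanh_eq_sinh_div_cosh]
    field_simp
  rw [← Complex.hasSum_ofReal]
  simp_rw [hterm, hvalue]
  exact ((summable_cotTerm hx).hasSum_iff.mpr (cot_series_rep' hx).symm).mul_left _

lemma two_div_tanh_two_mul {u : ℝ} (hu : u ≠ 0) : 2 / tanh (2 * u) = 1 / tanh u + tanh u := by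
  have hs : sinh u ≠ 0 := by simpa using hu
  rw [tanh_eq_sinh_div_cosh, tanh_eq_sinh_div_cosh, sinh_two_mul, cosh_two_mul]
  field_simp

lemma hasSum_odd_partial_fractions_tanh (y : ℝ) :
    HasSum (fun k : ℕ => 2 * y / (y ^ 2 + (2 * k + 1) ^ 2)) (π / 2 * tanh (π * y / 2)) := by
  rcases eq_or_ne y 0 with rfl | hy
  · simp
  set f : ℕ → ℝ := fun n => 2 * y / (y ^ 2 + (n + 1) ^ 2)
  have hf := hasSum_coth_partial_fractions hy
  have hhalf : HasSum (fun k => f (2 * k + 1))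
      (1 / 2 * (π / tanh (π * (y / 2)) - 1 / (y / 2))) := by
    refine ((hasSum_coth_partial_fractions (div_ne_zero hy two_ne_zero)).mul_left _).congr_fun
      fun k => ?_
    simp only [f]
    push_cast
    field_simp
    ring
  have hrest : HasSum (fun k => f (2 * k)) (∑' k, f (2 * k)) :=
    (hf.summable.comp_injective (mul_right_injective₀ two_ne_zero)).hasSum
  have hsum := hf.unique (hrest.even_add_odd hhalf)
  have hdouble := two_div_tanh_two_mul (u := π * y / 2) (by positivity)
  rw [show 2 * (π * y / 2) = π * y by ring] at hdouble
  rw [show π * (y / 2) = π * y / 2 by ring] at hsum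
  rw [show π / 2 * tanh (π * y / 2) = ∑' k, f (2 * k) by
    linear_combination hsum - π / 2 * hdouble]
  exact hrest.congr_fun fun k => by simp only [f]; push_cast; ring

theorem integral_sin_div_sinh_general (w : ℝ) :
    ∫ z in Set.Ioi (0 : ℝ), Real.sin (w * z) / Real.sinh (π * z)
      = (1 / 2) * Real.tanh (w / 2) := by
  have h := (hasSum_odd_partial_fractions_tanh (w / π)).div_const π
  rw [show π / 2 * tanh (π * (w / π) / 2) / π = 1 / 2 * tanh (w / 2) by field_simp] at h
  refine (hasSum_integral_sin_div_sinh w).unique (h.congr_fun fun n => ?_)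
  field_simp
  ring

theorem integral_sin_div_sinh (w : ℝ) (hw : 0 < w) :
    ∫ z in Set.Ioi (0 : ℝ), Real.sin (w * z) / Real.sinh (π * z)
      = (1 / 2) * Real.tanh (w / 2) :=
  integral_sin_div_sinh_general w
end

section
/- If X₁, X₂ are independent Exponential(1) random variables and W := ln X₁ - ln X₂, then the characteristic function of W at any real z equals πz/sinh(πz) (interpreted as 1 at z = 0). -/
/-! Since `W = log X₁ - log X₂`, its characteristic function is `E[X₁ ^ (iz)] E[X₂ ^ (-iz)]` by
independence, and for an Exp(1) variable `E[X ^ s] = Γ(1 + s)` is Euler's integral. The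
reflection formula turns `Γ(1 + iz) Γ(1 - iz) = iz Γ(iz) Γ(1 - iz)` into `πiz / sin(πiz)`,
which is `πz / sinh(πz)`. -/

open MeasureTheory ProbabilityTheory Real Set

lemma integral_expMeasure_one {E : Type*} [NormedAddCommGroup E] [NormedSpace ℝ E] (f : ℝ → E) :
    ∫ x, f x ∂expMeasure 1 = ∫ x in Ioi 0, rexp (-x) • f x := by
  rw [expMeasure, gammaMeasure, integral_withDensity_eq_integral_toReal_smul (f := gammaPDF 1 1)
    (measurable_gammaPDFReal 1 1).ennreal_ofReal (.of_forall fun _ => ENNReal.ofReal_lt_top),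
    ← integral_Ici_eq_integral_Ioi, ← setIntegral_eq_integral_of_forall_compl_eq_zero]
  · refine setIntegral_congr_fun measurableSet_Ici fun x hx => ?_
    simp [gammaPDF_of_nonneg hx, (exp_pos _).le]
  · intro x hx
    simp [gammaPDF_of_neg (not_le.mp hx)]

lemma integral_exp_mul_log_expMeasure_one {c : ℂ} (hc : -1 < c.re) :
    ∫ x, Complex.exp (c * Real.log x) ∂expMeasure 1 = Complex.Gamma (1 + c) := by
  rw [integral_expMeasure_one, Complex.Gamma_eq_integral (by simp; linarith),
    Complex.GammaIntegral, add_sub_cancel_left]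
  refine setIntegral_congr_fun measurableSet_Ioi fun x (hx : 0 < x) => ?_
  rw [Complex.cpow_def_of_ne_zero (by exact_mod_cast hx.ne'), ← Complex.ofReal_log hx.le,
    mul_comm c, Complex.real_smul]

lemma integral_exp_mul_log_of_map_eq_expMeasure_one {Ω : Type*} [MeasurableSpace Ω]
    {μ : Measure Ω} {X : Ω → ℝ} (hX : AEMeasurable X μ) (hlaw : μ.map X = expMeasure 1)
    {c : ℂ} (hc : -1 < c.re) :
    ∫ ω, Complex.exp (c * Real.log (X ω)) ∂μ = Complex.Gamma (1 + c) := by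
  rw [← integral_map (f := fun x => Complex.exp (c * Real.log x)) hX (by fun_prop), hlaw,
    integral_exp_mul_log_expMeasure_one hc]

namespace Complex

lemma Gamma_one_add_mul_Gamma_one_sub {s : ℂ} (hs : s ≠ 0) :
    Gamma (1 + s) * Gamma (1 - s) = π * s / sin (π * s) := by
  rw [add_comm, Gamma_add_one s hs, mul_assoc, Gamma_mul_Gamma_one_sub]
  ring

lemma Gamma_one_add_I_mul_mul_Gamma_one_sub_I_mul {z : ℝ} (hz : z ≠ 0) :
    Gamma (1 + I * z) * Gamma (1 - I * z) = ((π * z / Real.sinh (π * z) : ℝ) : ℂ) := by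
  rw [Gamma_one_add_mul_Gamma_one_sub (mul_ne_zero I_ne_zero (ofReal_ne_zero.mpr hz)),
    show (π : ℂ) * (I * z) = (π * z : ℝ) * I by push_cast; ring, sin_mul_I,
    mul_div_mul_right _ _ I_ne_zero, ← ofReal_sinh, ← ofReal_div]

end Complex

theorem charFun_log_ratio
    {Ω : Type*} [MeasurableSpace Ω] (μ : Measure Ω) [IsProbabilityMeasure μ]
    (X₁ X₂ : Ω → ℝ) (hX₁m : Measurable X₁) (hX₂m : Measurable X₂)
    (hindep : IndepFun X₁ X₂ μ)
    (hX₁ : Measure.map X₁ μ = expMeasure 1) (hX₂ : Measure.map X₂ μ = expMeasure 1)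
    (z : ℝ) :
    ∫ ω, Complex.exp (Complex.I * z * (Real.log (X₁ ω) - Real.log (X₂ ω))) ∂μ
      = if z = 0 then 1 else ((π * z / Real.sinh (π * z) : ℝ) : ℂ) := by
  by_cases hz : z = 0
  · simp [hz]
  rw [if_neg hz]
  set c : ℂ := Complex.I * z with hc
  have hsplit : ∀ ω, Complex.exp (c * (Real.log (X₁ ω) - Real.log (X₂ ω)))
      = Complex.exp (c * Real.log (X₁ ω)) * Complex.exp (-c * Real.log (X₂ ω)) := fun ω => by
    rw [← Complex.exp_add]; ring_nf
  simp_rw [hsplit]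
  rw [hindep.integral_fun_comp_mul_comp (f := fun x => Complex.exp (c * Real.log x))
      (g := fun x => Complex.exp (-c * Real.log x)) hX₁m.aemeasurable hX₂m.aemeasurable
      (by fun_prop) (by fun_prop),
    integral_exp_mul_log_of_map_eq_expMeasure_one hX₁m.aemeasurable hX₁ (by simp [hc]),
    integral_exp_mul_log_of_map_eq_expMeasure_one hX₂m.aemeasurable hX₂ (by simp [hc]),
    ← sub_eq_add_neg, hc, Complex.Gamma_one_add_I_mul_mul_Gamma_one_sub_I_mul hz]
end
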